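/- arXiv:1810.02528 — 5 statements merged into one kernel-verified Lean document; each statement's English description precedes it below -/
import Mathlib

section
/- Consider the planar ODE system ψ' = −θ − (ρ/2)·d/dψ(ψ²·M(ψ,θ)), θ' = ψ, where ρ > 0 and M: ℝ² → ℝ is a smooth nonnegative function. Then the origin (0,0) is an equilibrium point, and if M(0,0) > 0 the origin is locally asymptotically stable (the linearization has eigenvalues with negative real part). -/
/-- Dirac GAN dynamics `ψ' = −θ − (ρ/2)·d/dψ(ψ²·M(ψ,θ))`, `θ' = ψ` with `ρ > 0` and `M` smooth
nonnegative: the origin is an equilibrium, and if `M 0 0 > 0` then the linearization at the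
origin is the matrix `!![-ρ * M 0 0, -1; 1, 0]`, all of whose eigenvalues have negative
real part (local asymptotic stability). -/
theorem stmt2 (ρ : ℝ) (hρ : 0 < ρ) (M : ℝ → ℝ → ℝ)
    (hM : ContDiff ℝ (⊤ : ℕ∞) (Function.uncurry M)) (hMnn : ∀ p q, 0 ≤ M p q)
    (F : (Fin 2 → ℝ) → (Fin 2 → ℝ))
    (hF : ∀ x, F x = ![-x 1 - (ρ / 2) * deriv (fun s => s ^ 2 * M s (x 1)) (x 0), x 0]) :
    F ![0, 0] = 0 ∧
      (0 < M 0 0 →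
        HasFDerivAt F
          (Matrix.mulVecLin (!![-ρ * M 0 0, -1; 1, 0])).toContinuousLinearMap ![0, 0] ∧
        ∀ μ ∈ spectrum ℂ ((!![-ρ * M 0 0, -1; 1, 0]).map Complex.ofReal), μ.re < 0) := by
  have hMd : Differentiable ℝ (Function.uncurry M) := hM.differentiable (by simp)
  set Q : ℝ × ℝ → ℝ := fun p => fderiv ℝ (Function.uncurry M) p (1, 0) with hQdef
  have hQc : ContDiff ℝ (⊤ : ℕ∞) Q := (hM.fderiv_right (by simp)).clm_apply contDiff_const
  have hQd : Differentiable ℝ Q := hQc.differentiable (by simp)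
  -- derivative formula
  have key : ∀ u t : ℝ, deriv (fun s => s ^ 2 * M s t) u
      = 2 * u * M u t + u ^ 2 * Q (u, t) := by
    intro u t
    have hin : HasDerivAt (fun s : ℝ => (s, t)) (1, 0) u :=
      (hasDerivAt_id u).prodMk (hasDerivAt_const u t)
    have hMt : HasDerivAt (fun s : ℝ => M s t) (Q (u, t)) u := by
      have := (hMd (u, t)).hasFDerivAt.comp_hasDerivAt u hin
      exact this
    have := (hasDerivAt_pow 2 u).mul hMt
    have h2 := this.deriv
    exact h2.trans (by push_cast; ring)
  constructor
  · rw [hF]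
    funext i
    fin_cases i <;> simp [key]
  · intro hM00
    constructor
    · -- the Fréchet derivative
      have hFeq : F = fun x : Fin 2 → ℝ =>
          ![-x 1 - (ρ / 2) * (2 * x 0 * M (x 0) (x 1) + x 0 * x 0 * Q (x 0, x 1)), x 0] := by
        funext x
        rw [hF, key]
        simp [pow_two]
      rw [hFeq]
      rw [hasFDerivAt_pi']
      intro i
      set pt : Fin 2 → ℝ := ![0, 0] with hpt
      have h0 : HasFDerivAt (fun x : Fin 2 → ℝ => x 0)
          (ContinuousLinearMap.proj 0 : (Fin 2 → ℝ) →L[ℝ] ℝ) pt :=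
        (ContinuousLinearMap.proj 0 : (Fin 2 → ℝ) →L[ℝ] ℝ).hasFDerivAt
      have h1 : HasFDerivAt (fun x : Fin 2 → ℝ => x 1)
          (ContinuousLinearMap.proj 1 : (Fin 2 → ℝ) →L[ℝ] ℝ) pt :=
        (ContinuousLinearMap.proj 1 : (Fin 2 → ℝ) →L[ℝ] ℝ).hasFDerivAt
      have hJ : HasFDerivAt (fun x : Fin 2 → ℝ => (x 0, x 1))
          ((ContinuousLinearMap.proj 0 : (Fin 2 → ℝ) →L[ℝ] ℝ).prod
            (ContinuousLinearMap.proj 1)) pt :=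
        h0.prodMk h1
      have hMc : HasFDerivAt (fun x : Fin 2 → ℝ => M (x 0) (x 1))
          ((fderiv ℝ (Function.uncurry M) (0, 0)).comp
            ((ContinuousLinearMap.proj 0 : (Fin 2 → ℝ) →L[ℝ] ℝ).prod
              (ContinuousLinearMap.proj 1))) pt := by
        have := (hMd (0, 0)).hasFDerivAt.comp pt (by simpa [hpt] using hJ)
        exact this
      have hQcmp : HasFDerivAt (fun x : Fin 2 → ℝ => Q (x 0, x 1))
          ((fderiv ℝ Q (0, 0)).comp
            ((ContinuousLinearMap.proj 0 : (Fin 2 → ℝ) →L[ℝ] ℝ).prod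
              (ContinuousLinearMap.proj 1))) pt := by
        have := (hQd (0, 0)).hasFDerivAt.comp pt (by simpa [hpt] using hJ)
        exact this
      have hG : HasFDerivAt (fun x : Fin 2 → ℝ =>
          2 * x 0 * M (x 0) (x 1) + x 0 * x 0 * Q (x 0, x 1)) _ pt :=
        ((h0.const_mul 2).mul hMc).add ((h0.mul h0).mul hQcmp)
      fin_cases i
      · have hc : HasFDerivAt (fun x : Fin 2 → ℝ =>
            -x 1 - (ρ / 2) * (2 * x 0 * M (x 0) (x 1) + x 0 * x 0 * Q (x 0, x 1))) _ pt :=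
          h1.neg.sub (hG.const_mul (ρ / 2))
        refine hc.congr_fderiv ?_
        ext v
        simp [hpt, Matrix.mulVec, Fin.sum_univ_two, Matrix.mulVecLin, Matrix.vecHead, Matrix.vecTail]
        ring
      · refine h0.congr_fderiv ?_
        ext v
        simp [hpt, Matrix.mulVec, Fin.sum_univ_two, Matrix.mulVecLin, Matrix.vecHead, Matrix.vecTail]
    · -- eigenvalues
      intro μ hμ
      set a : ℝ := ρ * M 0 0 with ha
      have hapos : 0 < a := mul_pos hρ hM00
      have hdet : μ ^ 2 + (a : ℂ) * μ + 1 = 0 := by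
        rw [spectrum.mem_iff] at hμ
        have : ¬ IsUnit ((algebraMap ℂ (Matrix (Fin 2) (Fin 2) ℂ) μ
            - (!![-ρ * M 0 0, -1; 1, 0]).map Complex.ofReal).det) := by
          rwa [Matrix.isUnit_iff_isUnit_det] at hμ
        rw [isUnit_iff_ne_zero, not_not] at this
        rw [Matrix.algebraMap_eq_diagonal] at this
        simp [Matrix.det_fin_two, Matrix.diagonal] at this
        rw [ha]; push_cast; linear_combination this
      have h1 := congrArg Complex.re hdet
      have h2 := congrArg Complex.im hdet
      simp [pow_two, Complex.add_re, Complex.add_im, Complex.mul_re, Complex.mul_im] at h1 h2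
      rcases mul_eq_zero.mp (by linarith : μ.im * (2 * μ.re + a) = 0) with hy | hx
      · -- im = 0
        rw [hy] at h1
        nlinarith [sq_nonneg μ.re, sq_nonneg (μ.re + a)]
      · linarith
end

section
/- Consider the planar ODE ψ' = 1/3 − θ²/3 − 4ρA²ψ, θ' = 2ψθ/3 with constants ρ > 0 and A > 0. Then (0,1) and (0,−1) are equilibrium points, and both are locally asymptotically stable: the Jacobian at (0,±1) has eigenvalues λ = −2ρA² ± √(4ρ²A⁴ − 4/9), whose real parts are negative. -/
open Matrix ContinuousLinearMap

lemma deriv_helper (c t : ℝ) (F : (Fin 2 → ℝ) → (Fin 2 → ℝ))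
    (hF : ∀ x, F x = ![1 / 3 - (x 1) ^ 2 / 3 - c * x 0, 2 * x 0 * x 1 / 3]) :
    HasFDerivAt F
      (Matrix.mulVecLin (!![-c, -(2 * t / 3); 2 * t / 3, 0])).toContinuousLinearMap
      ![0, t] := by
  set L := (Matrix.mulVecLin (!![-c, -(2 * t / 3); 2 * t / 3, (0:ℝ)])).toContinuousLinearMap
    with hL
  apply hasFDerivAt_pi''
  intro i
  have h0 : HasFDerivAt (fun x : Fin 2 → ℝ => x 0) (proj 0 : (Fin 2 → ℝ) →L[ℝ] ℝ) ![0, t] :=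
    (proj 0 : (Fin 2 → ℝ) →L[ℝ] ℝ).hasFDerivAt
  have h1 : HasFDerivAt (fun x : Fin 2 → ℝ => x 1) (proj 1 : (Fin 2 → ℝ) →L[ℝ] ℝ) ![0, t] :=
    (proj 1 : (Fin 2 → ℝ) →L[ℝ] ℝ).hasFDerivAt
  fin_cases i
  · have H : HasFDerivAt (fun x : Fin 2 → ℝ => 1 / 3 - 1 / 3 * (x 1 * x 1) - c * x 0)
        ((0 : (Fin 2 → ℝ) →L[ℝ] ℝ) - (1 / 3 : ℝ) •
          ((![(0:ℝ), t] 1) • proj 1 + (![(0:ℝ), t] 1) • proj 1) - c • proj 0) ![0, t] :=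
      ((hasFDerivAt_const (1 / 3 : ℝ) _).sub ((h1.mul h1).const_mul (1 / 3))).sub
        (h0.const_mul c)
    refine (H.congr_fderiv ?_).congr_of_eventuallyEq ?_
    · ext v
      simp [hL, Matrix.mulVec, dotProduct, Fin.sum_univ_two]
      ring
    · filter_upwards with x
      rw [hF x]
      simp
      ring
  · have H : HasFDerivAt (fun x : Fin 2 → ℝ => 2 / 3 * (x 0 * x 1))
        ((2 / 3 : ℝ) • ((![(0:ℝ), t] 0) • (proj 1 : (Fin 2 → ℝ) →L[ℝ] ℝ)
          + (![(0:ℝ), t] 1) • proj 0)) ![0, t] :=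
      (h0.mul h1).const_mul (2 / 3)
    refine (H.congr_fderiv ?_).congr_of_eventuallyEq ?_
    · ext v
      simp [hL, Matrix.mulVec, dotProduct, Fin.sum_univ_two]
      ring
    · filter_upwards with x
      rw [hF x]
      simp
      ring

lemma spec_helper (a b c : ℂ) (μ : ℂ) :
    μ ∈ spectrum ℂ (!![a, b; c, 0]) ↔ μ ^ 2 - a * μ - b * c = 0 := by
  rw [spectrum.mem_iff, Matrix.isUnit_iff_isUnit_det, isUnit_iff_ne_zero, not_not]
  have : (algebraMap ℂ (Matrix (Fin 2) (Fin 2) ℂ)) μ - !![a, b; c, 0]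
      = !![μ - a, -b; -c, μ] := by
    ext i j
    fin_cases i <;> fin_cases j <;> simp [Matrix.algebraMap_matrix_apply]
  rw [this, Matrix.det_fin_two_of]
  constructor <;> intro h <;> linear_combination h

lemma spec_set (a b c s : ℂ) (hs : s ^ 2 = (a / 2) ^ 2 + b * c) :
    spectrum ℂ (!![a, b; c, 0]) = {a / 2 + s, a / 2 - s} := by
  ext μ
  rw [spec_helper]
  constructor
  · intro h
    have : (μ - (a / 2 + s)) * (μ - (a / 2 - s)) = 0 := by linear_combination h - hs
    rcases mul_eq_zero.1 this with h' | h'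
    · exact Or.inl (sub_eq_zero.1 h')
    · exact Or.inr (sub_eq_zero.1 h')
  · rintro (rfl | h)
    · linear_combination hs
    · rw [Set.mem_singleton_iff] at h
      subst h
      linear_combination hs

lemma map_fin_two (a b c : ℝ) :
    (!![a, b; c, 0]).map (Complex.ofReal) = !![(a:ℂ), (b:ℂ); (c:ℂ), 0] := by
  ext i j
  fin_cases i <;> fin_cases j <;> simp

lemma re_neg_of_root (a : ℝ) (ha : 0 < a) (μ : ℂ)
    (h : μ ^ 2 + (a : ℂ) * μ + 4 / 9 = 0) : μ.re < 0 := by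
  set x := μ.re
  set y := μ.im
  have hre : x ^ 2 - y ^ 2 + a * x + 4 / 9 = 0 := by
    have := congrArg Complex.re h
    simpa [pow_two, Complex.mul_re, Complex.add_re, x, y] using this
  have him : 2 * x * y + a * y = 0 := by
    have := congrArg Complex.im h
    simp [pow_two, Complex.mul_im, Complex.add_im, x, y] at this
    linarith
  by_contra hx
  push_neg at hx
  have h2xa : 0 < 2 * x + a := by linarith
  have hy2 : y ^ 2 * (2 * x + a) = 0 := by linear_combination y * him
  have hy : y ^ 2 = 0 := by
    rcases mul_eq_zero.1 hy2 with h' | h'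
    · exact h'
    · linarith
  nlinarith [hy, hre, hx, ha, sq_nonneg x]

/-- Toy SGP μ-WGAN example `ψ' = 1/3 − θ²/3 − 4ρA²ψ`, `θ' = 2ψθ/3` with `ρ, A > 0`:
`(0,1)` and `(0,−1)` are equilibria, the Jacobians there are
`!![-4ρA², ∓2/3; ±2/3, 0]`, the eigenvalues are `−2ρA² ± √(4ρ²A⁴ − 4/9)`, and all
eigenvalues have strictly negative real part (local asymptotic stability). -/
theorem stmt5 (ρ A : ℝ) (hρ : 0 < ρ) (hA : 0 < A)
    (F : (Fin 2 → ℝ) → (Fin 2 → ℝ))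
    (hF : ∀ x, F x = ![1 / 3 - (x 1) ^ 2 / 3 - 4 * ρ * A ^ 2 * x 0, 2 * x 0 * x 1 / 3]) :
    F ![0, 1] = 0 ∧ F ![0, -1] = 0 ∧
      HasFDerivAt F
        (Matrix.mulVecLin (!![-4 * ρ * A ^ 2, -(2 / 3); 2 / 3, 0])).toContinuousLinearMap
        ![0, 1] ∧
      HasFDerivAt F
        (Matrix.mulVecLin (!![-4 * ρ * A ^ 2, 2 / 3; -(2 / 3), 0])).toContinuousLinearMap
        ![0, -1] ∧
      (∃ s : ℂ, s ^ 2 = ((4 * ρ ^ 2 * A ^ 4 - 4 / 9 : ℝ) : ℂ) ∧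
        spectrum ℂ ((!![-4 * ρ * A ^ 2, -(2 / 3); 2 / 3, 0]).map Complex.ofReal) =
          {(-2 * ρ * A ^ 2 + s : ℂ), -2 * ρ * A ^ 2 - s} ∧
        spectrum ℂ ((!![-4 * ρ * A ^ 2, 2 / 3; -(2 / 3), 0]).map Complex.ofReal) =
          {(-2 * ρ * A ^ 2 + s : ℂ), -2 * ρ * A ^ 2 - s}) ∧
      (∀ μ ∈ spectrum ℂ ((!![-4 * ρ * A ^ 2, -(2 / 3); 2 / 3, 0]).map Complex.ofReal),
        μ.re < 0) ∧
      (∀ μ ∈ spectrum ℂ ((!![-4 * ρ * A ^ 2, 2 / 3; -(2 / 3), 0]).map Complex.ofReal),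
        μ.re < 0) := by
  have hm1 : (!![-4 * ρ * A ^ 2, -(2 / 3); 2 / 3, 0]).map (Complex.ofReal)
      = !![((-4 * ρ * A ^ 2 : ℝ) : ℂ), ((-(2/3) : ℝ) : ℂ); ((2/3 : ℝ) : ℂ), 0] :=
    map_fin_two _ _ _
  have hm2 : (!![-4 * ρ * A ^ 2, 2 / 3; -(2 / 3), 0]).map (Complex.ofReal)
      = !![((-4 * ρ * A ^ 2 : ℝ) : ℂ), ((2/3 : ℝ) : ℂ); ((-(2/3) : ℝ) : ℂ), 0] :=
    map_fin_two _ _ _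
  obtain ⟨s, hs⟩ := IsAlgClosed.exists_pow_nat_eq ((4 * ρ ^ 2 * A ^ 4 - 4 / 9 : ℝ) : ℂ)
    (n := 2) (by norm_num)
  have hbc : (((-(2/3) : ℝ) : ℂ)) * (((2/3 : ℝ)) : ℂ) = -(4/9) := by push_cast; norm_num
  have hroot : ∀ μ : ℂ, (μ ^ 2 - ((-4 * ρ * A ^ 2 : ℝ) : ℂ) * μ - (-(4/9)) = 0)
      ↔ μ ^ 2 + ((4 * ρ * A ^ 2 : ℝ) : ℂ) * μ + 4 / 9 = 0 := by
    intro μ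
    constructor <;> intro h <;> [skip; skip] <;>
      · push_cast at h ⊢; linear_combination h
  have hsq : s ^ 2 = ((((-4 * ρ * A ^ 2 : ℝ) : ℂ)) / 2) ^ 2
      + ((-(2/3) : ℝ) : ℂ) * ((2/3 : ℝ) : ℂ) := by
    rw [hs]; push_cast; ring
  have hsq2 : s ^ 2 = ((((-4 * ρ * A ^ 2 : ℝ) : ℂ)) / 2) ^ 2
      + ((2/3 : ℝ) : ℂ) * ((-(2/3) : ℝ) : ℂ) := by
    rw [hs]; push_cast; ring
  have hhalf : (((-4 * ρ * A ^ 2 : ℝ) : ℂ)) / 2 = -2 * ρ * A ^ 2 := by push_cast; ring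
  refine ⟨?_, ?_, ?_, ?_, ⟨s, hs, ?_, ?_⟩, ?_, ?_⟩
  · rw [hF]
    funext i
    fin_cases i <;> norm_num
  · rw [hF]
    funext i
    fin_cases i <;> norm_num
  · have := deriv_helper (4 * ρ * A ^ 2) 1 F (by
      intro x; rw [hF x])
    have hM : !![-(4 * ρ * A ^ 2), -(2 * (1:ℝ) / 3); 2 * 1 / 3, 0]
        = !![-4 * ρ * A ^ 2, -(2 / 3); 2 / 3, 0] := by
      congr 1 <;> norm_num
    rwa [hM] at this
  · have := deriv_helper (4 * ρ * A ^ 2) (-1) F (by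
      intro x; rw [hF x])
    have hM : !![-(4 * ρ * A ^ 2), -(2 * (-1:ℝ) / 3); 2 * (-1) / 3, 0]
        = !![-4 * ρ * A ^ 2, 2 / 3; -(2 / 3), 0] := by
      congr 1 <;> norm_num
    rwa [hM] at this
  · rw [hm1, spec_set _ _ _ s hsq, hhalf]
  · rw [hm2, spec_set _ _ _ s hsq2, hhalf]
  · intro μ hμ
    rw [hm1, spec_helper, hbc, hroot] at hμ
    exact re_neg_of_root (4 * ρ * A ^ 2) (by positivity) μ (by push_cast at hμ ⊢; linear_combination hμ)
  · intro μ hμ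
    rw [hm2, spec_helper] at hμ
    have : μ ^ 2 + ((4 * ρ * A ^ 2 : ℝ) : ℂ) * μ + 4 / 9 = 0 := by
      push_cast at hμ ⊢; linear_combination hμ
    exact re_neg_of_root (4 * ρ * A ^ 2) (by positivity) μ (by push_cast at this ⊢; linear_combination this)
end

section
/- Consider the planar ODE ψ' = −θ² − (4/3)ρψθ², θ' = 2ψθ with ρ > 0. The set of equilibrium points is exactly the ψ-axis {(ψ,0) : ψ ∈ ℝ}, and no solution trajectory with initial condition θ(0) ≠ 0 converges to a point (b,0) with b ≥ 0; in particular the system does not converge to the origin from any starting point off the ψ-axis. -/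
/-!
Off the `ψ`-axis `θ` never vanishes, since `θ' = 2ψθ` is linear in `θ`. If `(ψ, θ) → (b, 0)` with
`b ≥ 0`, then eventually `1 + (4/3)ρψ > 0`, so `ψ' = -θ²(1 + (4/3)ρψ) < 0` and `ψ` strictly
decreases to `b`; hence `ψ > b ≥ 0` from then on. But then `(θ²)' = 4ψθ² > 0`, so `θ²` strictly
increases to its limit `0`, which is impossible for a positive function.
-/

open Filter Set Topology

theorem vectorField_eq_zero_iff (ρ : ℝ) (p : ℝ × ℝ) :
    ((-p.2 ^ 2 - (4 / 3) * ρ * p.1 * p.2 ^ 2, 2 * p.1 * p.2) = ((0 : ℝ), (0 : ℝ))) ↔ p.2 = 0 := by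
  constructor
  · intro h
    obtain ⟨h₁, h₂⟩ := Prod.mk.inj h
    by_contra hne
    have hp₁ : p.1 = 0 := by simpa [hne] using h₂
    exact hne (pow_eq_zero_iff two_ne_zero |>.mp (by simpa [hp₁] using h₁))
  · intro h
    simp [h]

theorem ne_zero_of_hasDerivAt_mul {f g : ℝ → ℝ} (hg : Continuous g)
    (hf : ∀ t, HasDerivAt f (g t * f t) t) {t₀ : ℝ} (h₀ : f t₀ ≠ 0) (t : ℝ) : f t ≠ 0 := by
  set G : ℝ → ℝ := fun u => ∫ x in (0 : ℝ)..u, g x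
  have hG : ∀ u, HasDerivAt G (g u) u := fun u => (hg.integral_hasStrictDerivAt 0 u).hasDerivAt
  have hconst : ∀ u, HasDerivAt (fun u => f u * Real.exp (-G u)) 0 u := fun u =>
    ((hf u).mul (hG u).neg.exp).congr_deriv (by ring)
  have := is_const_of_deriv_eq_zero (fun u => (hconst u).differentiableAt)
    (fun u => (hconst u).deriv) t t₀
  intro ht
  simp [ht, h₀, Real.exp_ne_zero] at this

theorem StrictMonoOn.lt_of_tendsto_atTop {α β : Type*} [LinearOrder α] [NoMaxOrder α]
    [TopologicalSpace β] [Preorder β] [OrderClosedTopology β] {f : α → β} {T t : α} {c : β}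
    (hf : StrictMonoOn f (Ici T)) (hc : Tendsto f atTop (𝓝 c)) (ht : T ≤ t) : f t < c := by
  have : Nonempty α := ⟨t⟩
  obtain ⟨s, hts⟩ := exists_gt t
  have hs : T ≤ s := ht.trans hts.le
  calc f t < f s := hf ht hs hts
    _ ≤ c := ge_of_tendsto hc <| (eventually_ge_atTop s).mono fun u hsu =>
      hf.monotoneOn hs (hs.trans hsu) hsu

theorem StrictAntiOn.lt_of_tendsto_atTop {α β : Type*} [LinearOrder α] [NoMaxOrder α]
    [TopologicalSpace β] [Preorder β] [OrderClosedTopology β] {f : α → β} {T t : α} {c : β}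
    (hf : StrictAntiOn f (Ici T)) (hc : Tendsto f atTop (𝓝 c)) (ht : T ≤ t) : c < f t :=
  hf.dual_right.lt_of_tendsto_atTop hc ht

theorem strictMonoOn_Ici_of_hasDerivAt_pos {f f' : ℝ → ℝ} {T : ℝ}
    (hf : ∀ t, HasDerivAt f (f' t) t) (hf' : ∀ t, T < t → 0 < f' t) : StrictMonoOn f (Ici T) :=
  strictMonoOn_of_hasDerivWithinAt_pos (convex_Ici T)
    (fun t _ => (hf t).continuousAt.continuousWithinAt) (fun t _ => (hf t).hasDerivWithinAt)
    (fun t ht => hf' t (by rwa [interior_Ici] at ht))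

theorem strictAntiOn_Ici_of_hasDerivAt_neg {f f' : ℝ → ℝ} {T : ℝ}
    (hf : ∀ t, HasDerivAt f (f' t) t) (hf' : ∀ t, T < t → f' t < 0) : StrictAntiOn f (Ici T) :=
  strictAntiOn_of_hasDerivWithinAt_neg (convex_Ici T)
    (fun t _ => (hf t).continuousAt.continuousWithinAt) (fun t _ => (hf t).hasDerivWithinAt)
    (fun t ht => hf' t (by rwa [interior_Ici] at ht))

/-- For the planar ODE `ψ' = −θ² − (4/3)ρψθ²`, `θ' = 2ψθ` with `ρ > 0`:
the equilibrium points are exactly the `ψ`-axis, and no trajectory starting with `θ 0 ≠ 0`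
converges to a point `(b, 0)` with `b ≥ 0`; in particular the system does not converge to the
origin from any starting point off the `ψ`-axis. -/
theorem stmt7 (ρ : ℝ) (hρ : 0 < ρ) :
    (∀ p : ℝ × ℝ,
      ((-p.2 ^ 2 - (4 / 3) * ρ * p.1 * p.2 ^ 2, 2 * p.1 * p.2) = ((0 : ℝ), (0 : ℝ)) ↔
        p.2 = 0)) ∧
    ∀ ψ θ : ℝ → ℝ,
      (∀ t, HasDerivAt ψ (-(θ t) ^ 2 - (4 / 3) * ρ * ψ t * (θ t) ^ 2) t) →
      (∀ t, HasDerivAt θ (2 * ψ t * θ t) t) →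
      θ 0 ≠ 0 →
      ∀ b : ℝ, 0 ≤ b →
        ¬ Filter.Tendsto (fun t => (ψ t, θ t)) Filter.atTop (nhds (b, 0)) := by
  refine ⟨vectorField_eq_zero_iff ρ, fun ψ θ hψ hθ hθ₀ b hb hlim => ?_⟩
  have hψc : Continuous ψ := continuous_iff_continuousAt.2 fun t => (hψ t).continuousAt
  have hθsq_pos : ∀ t, 0 < θ t ^ 2 :=
    fun t => pow_two_pos_of_ne_zero (ne_zero_of_hasDerivAt_mul (continuous_const.mul hψc) hθ hθ₀ t)
  have hψlim : Tendsto ψ atTop (𝓝 b) := hlim.fst_nhds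
  have hθlim : Tendsto (fun t => θ t ^ 2) atTop (𝓝 0) := by simpa using hlim.snd_nhds.pow 2
  obtain ⟨T, hT⟩ : ∃ T, ∀ t ≥ T, 0 < 1 + (4 / 3) * ρ * ψ t :=
    eventually_atTop.1 <| (tendsto_const_nhds.add (tendsto_const_nhds.mul hψlim)).eventually
      (lt_mem_nhds (by positivity))
  have hψanti : StrictAntiOn ψ (Ici T) := strictAntiOn_Ici_of_hasDerivAt_neg hψ fun t ht => by
    nlinarith [mul_pos (hθsq_pos t) (hT t ht.le)]
  have hθsq : StrictMonoOn (fun t => θ t ^ 2) (Ici T) :=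
    strictMonoOn_Ici_of_hasDerivAt_pos (fun t => (hθ t).pow 2) fun t ht => by
      have hbψ := hψanti.lt_of_tendsto_atTop hψlim ht.le
      simp only [Nat.cast_ofNat, pow_one, Nat.add_one_sub_one]
      nlinarith [mul_pos (hθsq_pos t) (hb.trans_lt hbψ)]
  exact (hθsq.lt_of_tendsto_atTop hθlim le_rfl).not_ge (sq_nonneg _)
end

section
/- Let A be a negative definite n×n real matrix (i.e., −A is symmetric positive definite, or more generally A + Aᵀ is negative definite) and B an n×m real matrix of full column rank. Then the block matrix [[A, B],[−Bᵀ, 0]] is Hurwitz: all its eigenvalues have strictly negative real part. -/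
/-! If `M = [[A, B], [-Bᴴ, 0]]` and `M v = μ v`, then `2 Re μ ‖v‖² = v* (M + Mᴴ) v = x* (A + Aᴴ) x`
with `x` the upper block of `v`, since the skew off-diagonal blocks cancel in `M + Mᴴ`. This is
negative when `x ≠ 0`, while `x = 0` forces `B y = 0`, hence `v = 0`, by injectivity of `B`.
Both hypotheses pass from the real matrices to their complexifications. -/

open Matrix
open scoped ComplexOrder

namespace Matrix

variable {ι m : Type*}

theorem exists_mulVec_eq_smul_of_mem_spectrum [Fintype ι] [DecidableEq ι] {K : Type*} [Field K]
    {M : Matrix ι ι K} {μ : K} (hμ : μ ∈ spectrum K M) : ∃ v ≠ 0, M *ᵥ v = μ • v := by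
  rw [← spectrum_toLin', ← Module.End.hasEigenvalue_iff_mem_spectrum] at hμ
  obtain ⟨v, hv, hv0⟩ := hμ.exists_hasEigenvector
  exact ⟨v, hv0, by simpa using Module.End.mem_eigenspace_iff.mp hv⟩

theorem star_dotProduct_conjTranspose_mulVec [Fintype ι] {R : Type*} [CommRing R] [StarRing R]
    (M : Matrix ι ι R) (v : ι → R) : star v ⬝ᵥ (Mᴴ *ᵥ v) = star (star v ⬝ᵥ (M *ᵥ v)) := by
  rw [dotProduct_mulVec, ← star_mulVec, star_dotProduct]

theorem star_dotProduct_add_conjTranspose_mulVec [Fintype ι] {R : Type*} [CommRing R]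
    [StarRing R] {M : Matrix ι ι R} {v : ι → R} {μ : R} (h : M *ᵥ v = μ • v) :
    star v ⬝ᵥ ((M + Mᴴ) *ᵥ v) = (μ + star μ) * (star v ⬝ᵥ v) := by
  rw [add_mulVec, dotProduct_add, star_dotProduct_conjTranspose_mulVec, h, dotProduct_smul,
    smul_eq_mul, star_mul, ← star_dotProduct, add_mul, mul_comm (star v ⬝ᵥ v)]

theorem mulVec_injective_of_rank_eq [Fintype m] {K : Type*} [Field K] {B : Matrix ι m K}
    (h : B.rank = Fintype.card m) : Function.Injective B.mulVec := by
  have hrank := B.mulVecLin.finrank_range_add_finrank_ker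
  rw [← rank, h, Module.finrank_fintype_fun_eq_card, Nat.add_eq_left,
    Submodule.finrank_eq_zero] at hrank
  exact LinearMap.ker_eq_bot.mp hrank

variable {𝕜 : Type*} [RCLike 𝕜]

theorem fromBlocks_skew_add_conjTranspose (A : Matrix ι ι 𝕜) (B : Matrix ι m 𝕜) :
    fromBlocks A B (-Bᴴ) 0 + (fromBlocks A B (-Bᴴ) 0)ᴴ = fromBlocks (A + Aᴴ) 0 0 0 := by
  simp [fromBlocks_conjTranspose, fromBlocks_add]

theorem re_lt_zero_of_mem_spectrum_fromBlocks [Fintype ι] [Fintype m] [DecidableEq ι]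
    [DecidableEq m] {A : Matrix ι ι 𝕜} {B : Matrix ι m 𝕜} (hA : (-(A + Aᴴ)).PosDef)
    (hB : Function.Injective B.mulVec) {μ : 𝕜}
    (hμ : μ ∈ spectrum 𝕜 (fromBlocks A B (-Bᴴ) 0)) : RCLike.re μ < 0 := by
  obtain ⟨v, hv0, hv⟩ := exists_mulVec_eq_smul_of_mem_spectrum hμ
  set x := v ∘ Sum.inl
  set y := v ∘ Sum.inr
  have hsplit : v = Sum.elim x y := (Sum.elim_comp_inl_inr v).symm
  have hx0 : x ≠ 0 := by
    intro hx
    have hBy : B *ᵥ y = B *ᵥ 0 := by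
      ext i
      have hrow := congrFun hv (Sum.inl i)
      rw [hsplit, hx, fromBlocks_mulVec] at hrow
      simpa using hrow
    exact hv0 (by rw [hsplit, hx, hB hBy]; simp)
  have hquad : star v ⬝ᵥ ((fromBlocks (A + Aᴴ) 0 0 0) *ᵥ v) = star x ⬝ᵥ ((A + Aᴴ) *ᵥ x) := by
    rw [hsplit, fromBlocks_mulVec]
    simp [Fintype.sum_sum_type, dotProduct]
  have hneg : RCLike.re (star x ⬝ᵥ ((A + Aᴴ) *ᵥ x)) < 0 := by
    have := hA.re_dotProduct_pos hx0
    rwa [neg_mulVec, dotProduct_neg, map_neg, neg_pos] at this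
  have hpos := RCLike.pos_iff.mp (dotProduct_star_self_pos_iff.mpr hv0)
  have hform : RCLike.re ((μ + star μ) * (star v ⬝ᵥ v)) =
      2 * RCLike.re μ * RCLike.re (star v ⬝ᵥ v) := by
    rw [RCLike.star_def, RCLike.add_conj, RCLike.mul_re]
    simp [hpos.2]
  rw [← hquad, ← fromBlocks_skew_add_conjTranspose, star_dotProduct_add_conjTranspose_mulVec hv,
    hform] at hneg
  nlinarith

theorem re_star_dotProduct_map_ofReal_mulVec [Fintype ι] (S : Matrix ι ι ℝ) (z : ι → ℂ) :
    (star z ⬝ᵥ (S.map Complex.ofReal *ᵥ z)).re =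
      (fun i ↦ (z i).re) ⬝ᵥ (S *ᵥ fun i ↦ (z i).re) +
        (fun i ↦ (z i).im) ⬝ᵥ (S *ᵥ fun i ↦ (z i).im) := by
  simp only [dotProduct, mulVec, map_apply, Pi.star_apply, Complex.re_sum, Finset.mul_sum,
    ← Finset.sum_add_distrib]
  refine Finset.sum_congr rfl fun i _ ↦ Finset.sum_congr rfl fun j _ ↦ ?_
  simp [Complex.mul_re, Complex.mul_im]

theorem PosDef.map_ofReal [Fintype ι] {S : Matrix ι ι ℝ} (hS : S.PosDef) :
    (S.map Complex.ofReal).PosDef := by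
  have hherm : (S.map Complex.ofReal).IsHermitian :=
    hS.isHermitian.map _ fun x ↦ (Complex.conj_ofReal x).symm
  refine .of_dotProduct_mulVec_pos hherm fun z hz ↦ RCLike.pos_iff.mpr ⟨?_, ?_⟩
  · have hre := hS.posSemidef.dotProduct_mulVec_nonneg (fun i ↦ (z i).re)
    have him := hS.posSemidef.dotProduct_mulVec_nonneg (fun i ↦ (z i).im)
    simp only [star_trivial] at hre him
    rw [RCLike.re_to_complex, re_star_dotProduct_map_ofReal_mulVec]
    by_cases h : (fun i ↦ (z i).re) = 0
    · have h' : (fun i ↦ (z i).im) ≠ 0 := fun h' ↦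
        hz (funext fun i ↦ Complex.ext (congrFun h i) (congrFun h' i))
      have := hS.dotProduct_mulVec_pos h'
      simp only [star_trivial] at this
      linarith
    · have := hS.dotProduct_mulVec_pos h
      simp only [star_trivial] at this
      linarith
  · exact hherm.im_star_dotProduct_mulVec_self z

theorem conjTranspose_map_ofReal (M : Matrix ι m ℝ) :
    (M.map Complex.ofReal)ᴴ = Mᵀ.map Complex.ofReal := by
  ext
  simp

theorem mulVec_map_ofReal_injective [Fintype ι] [Fintype m] {B : Matrix ι m ℝ}
    (hB : Function.Injective B.mulVec) : Function.Injective (B.map Complex.ofReal).mulVec := by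
  classical
  have hgram := (PosDef.conjTranspose_mul_self B hB).map_ofReal
  have hmap : (Bᴴ * B).map Complex.ofReal = (B.map Complex.ofReal)ᴴ * B.map Complex.ofReal := by
    rw [conjTranspose_map_ofReal, conjTranspose_eq_transpose_of_trivial]
    exact Matrix.map_mul (f := Complex.ofRealHom)
  rw [hmap] at hgram
  refine .of_comp (f := ((B.map Complex.ofReal)ᴴ).mulVec) ?_
  simpa only [Function.comp_def, mulVec_mulVec] using mulVec_injective_of_isUnit hgram.isUnit

end Matrix

/-- If `A + Aᵀ` is negative definite and `B` has full column rank, the block matrix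
`[[A, B], [-Bᵀ, 0]]` is Hurwitz: all its eigenvalues have strictly negative real part. -/
theorem stmt8 {n m : ℕ} (A : Matrix (Fin n) (Fin n) ℝ) (hA : (-(A + Aᵀ)).PosDef)
    (B : Matrix (Fin n) (Fin m) ℝ) (hB : B.rank = m) :
    ∀ μ ∈ spectrum ℂ ((Matrix.fromBlocks A B (-Bᵀ) 0).map Complex.ofReal), μ.re < 0 := by
  intro μ hμ
  have hblocks : (fromBlocks A B (-Bᵀ) 0).map Complex.ofReal =
      fromBlocks (A.map Complex.ofReal) (B.map Complex.ofReal) (-(B.map Complex.ofReal)ᴴ) 0 := by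
    rw [fromBlocks_map, conjTranspose_map_ofReal, Matrix.map_neg _ Complex.ofReal_neg,
      Matrix.map_zero _ Complex.ofReal_zero]
  rw [hblocks] at hμ
  refine re_lt_zero_of_mem_spectrum_fromBlocks ?_ ?_ hμ
  · rw [conjTranspose_map_ofReal, ← Matrix.map_add _ Complex.ofReal_add,
      ← Matrix.map_neg _ Complex.ofReal_neg]
    exact hA.map_ofReal
  · exact mulVec_map_ofReal_injective (mulVec_injective_of_rank_eq (by simpa using hB))
end

section
/- Let Q be a symmetric positive semidefinite n×n real matrix and R an n×m real matrix such that the null space of Q is contained in the null space of Rᵀ (equivalently, the column space of R is contained in the column space of Q). Let T_D be a matrix whose columns form an orthonormal basis of the column space of Q, and T_G a matrix whose columns form an orthonormal basis of the column space of RᵀR. Then T_Dᵀ R T_G has full column rank. -/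
open Matrix

/-- Adjoint identity for dot products. -/
private lemma dot_mulVec_adj {n m : ℕ} (A : Matrix (Fin n) (Fin m) ℝ)
    (u : Fin n → ℝ) (v : Fin m → ℝ) :
    u ⬝ᵥ (A *ᵥ v) = (Aᵀ *ᵥ u) ⬝ᵥ v := by
  rw [dotProduct_mulVec, mulVec_transpose]

/-- For a symmetric real matrix, kernel and range of `mulVecLin` span everything. -/
private lemma ker_sup_range_eq_top {n : ℕ} (Q : Matrix (Fin n) (Fin n) ℝ)
    (hsym : Qᵀ = Q) :
    LinearMap.ker Q.mulVecLin ⊔ LinearMap.range Q.mulVecLin = ⊤ := by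
  have hdisj : LinearMap.ker Q.mulVecLin ⊓ LinearMap.range Q.mulVecLin = ⊥ := by
    rw [Submodule.eq_bot_iff]
    rintro z ⟨hz1, w, hz2⟩
    have hz1' : Q *ᵥ z = 0 := hz1
    have hz2' : Q *ᵥ w = z := hz2
    have : z ⬝ᵥ z = 0 := by
      calc z ⬝ᵥ z = z ⬝ᵥ (Q *ᵥ w) := by rw [hz2']
        _ = (Qᵀ *ᵥ z) ⬝ᵥ w := dot_mulVec_adj Q z w
        _ = 0 := by rw [hsym, hz1', zero_dotProduct]
    exact dotProduct_self_eq_zero.mp this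
  apply Submodule.eq_top_of_finrank_eq
  have h1 := LinearMap.finrank_range_add_finrank_ker Q.mulVecLin
  have h2 := Submodule.finrank_sup_add_finrank_inf_eq
    (LinearMap.ker Q.mulVecLin) (LinearMap.range Q.mulVecLin)
  rw [hdisj, finrank_bot, add_zero] at h2
  rw [h2]
  simp only [Module.finrank_fin_fun] at h1 ⊢
  omega

/-- If `Q` is symmetric PSD, `N(Q) ⊆ N(Rᵀ)`, `T_D` has orthonormal columns spanning the column
space of `Q`, and `T_G` has orthonormal columns spanning the column space of `RᵀR`, then
`T_Dᵀ R T_G` has full column rank. -/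
theorem stmt9 {n m kD kG : ℕ}
    (Q : Matrix (Fin n) (Fin n) ℝ) (hQ : Q.PosSemidef)
    (R : Matrix (Fin n) (Fin m) ℝ)
    (hNull : ∀ u : Fin n → ℝ, Q.mulVec u = 0 → Rᵀ.mulVec u = 0)
    (TD : Matrix (Fin n) (Fin kD) ℝ) (hTDo : TDᵀ * TD = 1)
    (hTDr : LinearMap.range TD.mulVecLin = LinearMap.range Q.mulVecLin)
    (TG : Matrix (Fin m) (Fin kG) ℝ) (hTGo : TGᵀ * TG = 1)
    (hTGr : LinearMap.range TG.mulVecLin = LinearMap.range (Rᵀ * R).mulVecLin)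
    (hkD : 0 < kD) (hkG : 0 < kG) :
    Function.Injective (TDᵀ * R * TG).mulVec := by
  have hsym : Qᵀ = Q := by
    have := hQ.1
    rwa [Matrix.IsHermitian, conjTranspose_eq_transpose_of_trivial] at this
  -- reduce to kernel triviality
  suffices hker : ∀ x : Fin kG → ℝ, (TDᵀ * R * TG) *ᵥ x = 0 → x = 0 by
    intro a b hab
    have h := hker (a - b) (by rw [mulVec_sub, hab, sub_self])
    exact sub_eq_zero.mp h
  intro x hx
  set v : Fin m → ℝ := TG *ᵥ x with hv
  have hx' : TDᵀ *ᵥ (R *ᵥ v) = 0 := by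
    rw [hv, mulVec_mulVec, mulVec_mulVec]; exact hx
  -- Step A : R *ᵥ v ∈ range Q
  have hmem : R *ᵥ v ∈ LinearMap.range Q.mulVecLin := by
    have htop := ker_sup_range_eq_top Q hsym
    have : R *ᵥ v ∈ (⊤ : Submodule ℝ (Fin n → ℝ)) := trivial
    rw [← htop] at this
    rcases Submodule.mem_sup.mp this with ⟨a, ha, b, hb, hab⟩
    have ha' : Q *ᵥ a = 0 := ha
    rcases hb with ⟨w, hw⟩
    have hw' : Q *ᵥ w = b := hw
    have haR : Rᵀ *ᵥ a = 0 := hNull a ha'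
    have haz : a = 0 := by
      apply dotProduct_self_eq_zero.mp
      have h1 : a ⬝ᵥ (R *ᵥ v) = 0 := by
        rw [dot_mulVec_adj, haR, zero_dotProduct]
      have h2 : a ⬝ᵥ b = 0 := by
        rw [← hw', dot_mulVec_adj, hsym, ha', zero_dotProduct]
      have := hab ▸ h1
      rwa [dotProduct_add, h2, add_zero] at this
    exact ⟨w, by rw [mulVecLin_apply, hw', ← hab, haz, zero_add]⟩
  rw [← hTDr] at hmem
  rcases hmem with ⟨w, hw⟩
  rw [mulVecLin_apply] at hw
  have hwz : w = 0 := by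
    have : TDᵀ *ᵥ (TD *ᵥ w) = 0 := by rw [hw]; exact hx'
    rwa [mulVec_mulVec, hTDo, one_mulVec] at this
  have hRv : R *ᵥ v = 0 := by rw [← hw, hwz, mulVec_zero]
  -- Step D : v ∈ range (RᵀR) and RᵀR v = 0 give v = 0
  have hvmem : v ∈ LinearMap.range (Rᵀ * R).mulVecLin := by
    rw [← hTGr]; exact ⟨x, rfl⟩
  rcases hvmem with ⟨u, hu⟩
  rw [mulVecLin_apply] at hu
  have hRRv : (Rᵀ * R) *ᵥ v = 0 := by
    rw [← mulVec_mulVec, hRv, mulVec_zero]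
  have hRRs : (Rᵀ * R)ᵀ = Rᵀ * R := by rw [transpose_mul, transpose_transpose]
  have hvz : v = 0 := by
    apply dotProduct_self_eq_zero.mp
    have h := dot_mulVec_adj (Rᵀ * R) v u
    rw [hRRs, hu, hRRv, zero_dotProduct] at h
    exact h
  -- conclude
  have : TGᵀ *ᵥ v = 0 := by rw [hvz, mulVec_zero]
  rwa [hv, mulVec_mulVec, hTGo, one_mulVec] at this
end
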